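/- arXiv:math/0502388 — 4 statements merged into one kernel-verified Lean document; each statement's English description precedes it below -/
import Mathlib

section
/- Every graded completion of ℂ[z₁,…,z_d] is irreducible. Precisely: let G be a complex Hilbert space, Z₁,…,Z_d commuting bounded operators on G, and v ∈ G a unit vector such that the set {f(Z₁,…,Z_d)v : f ∈ ℂ[z₁,…,z_d]} has dense linear span in G, and such that Z₁G + ⋯ + Z_dG is a closed subspace of G equal to the orthogonal complement of ℂ·v. Then every orthogonal projection P on G satisfying PZ_k = Z_kP for all k = 1,…,d is either 0 or the identity operator. -/
set_option synthInstance.maxHeartbeats 1000000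
set_option maxHeartbeats 1000000

open ContinuousLinearMap
open scoped InnerProductSpace

/-- Evaluation `f ↦ f(Z₁,…,Z_d)v` of a polynomial at a commuting tuple of operators,
applied to a vector `v`.  (For commuting `Z` the ordered product below is the usual
substitution of `Z i` for the variable `z i`.) -/
noncomputable def polyEval {G : Type*} [NormedAddCommGroup G] [InnerProductSpace ℂ G]
    [CompleteSpace G] {d : ℕ} (Z : Fin d → G →L[ℂ] G) (v : G)
    (f : MvPolynomial (Fin d) ℂ) : G :=
  ∑ α ∈ f.support, f.coeff α • ((List.ofFn fun i => (Z i) ^ (α i)).prod v)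

/-- Every graded completion of `ℂ[z₁,…,z_d]` is irreducible: any orthogonal projection
commuting with the coordinate operators is `0` or `1`. -/
theorem stmt0 {G : Type*} [NormedAddCommGroup G] [InnerProductSpace ℂ G] [CompleteSpace G]
    {d : ℕ} (Z : Fin d → G →L[ℂ] G)
    (hcomm : ∀ j k, Z j ∘L Z k = Z k ∘L Z j)
    (v : G) (hv : ‖v‖ = 1)
    (hdense : Dense ((Submodule.span ℂ (Set.range (polyEval Z v)) : Submodule ℂ G) : Set G))
    (hrange : (⨆ k, LinearMap.range (Z k : G →ₗ[ℂ] G) : Submodule ℂ G) = (ℂ ∙ v)ᗮ)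
    (P : G →L[ℂ] G) (hP : IsIdempotentElem P) (hPsa : IsSelfAdjoint P)
    (hPZ : ∀ k, P ∘L Z k = Z k ∘L P) :
    P = 0 ∨ P = 1 := by
  -- P commutes with each Z k as elements of the algebra
  have hC : ∀ k, Commute P (Z k) := fun k => hPZ k
  -- P commutes with the list products
  have hprod : ∀ (α : Fin d → ℕ) (x : G),
      P ((List.ofFn fun i => (Z i) ^ (α i)).prod x)
        = (List.ofFn fun i => (Z i) ^ (α i)).prod (P x) := by
    intro α x
    have hc : Commute P (List.ofFn fun i => (Z i) ^ (α i)).prod := by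
      apply Commute.list_prod_right
      intro A hA
      rw [List.mem_ofFn] at hA
      obtain ⟨i, rfl⟩ := hA
      exact (hC i).pow_right _
    calc P ((List.ofFn fun i => (Z i) ^ (α i)).prod x)
        = (P * (List.ofFn fun i => (Z i) ^ (α i)).prod) x := rfl
      _ = ((List.ofFn fun i => (Z i) ^ (α i)).prod * P) x := by rw [hc]
      _ = _ := rfl
  -- evaluation lemma
  have heval : ∀ f, P (polyEval Z v f) = polyEval Z (P v) f := by
    intro f
    simp only [polyEval, map_sum, map_smul, hprod]
  -- P preserves the sup of ranges
  have hPM : ∀ x ∈ (⨆ k, LinearMap.range (Z k : G →ₗ[ℂ] G) : Submodule ℂ G),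
      P x ∈ (⨆ k, LinearMap.range (Z k : G →ₗ[ℂ] G) : Submodule ℂ G) := by
    intro x hx
    have hle : (⨆ k, LinearMap.range (Z k : G →ₗ[ℂ] G) : Submodule ℂ G)
        ≤ Submodule.comap (P : G →ₗ[ℂ] G) (⨆ k, LinearMap.range (Z k : G →ₗ[ℂ] G)) := by
      refine iSup_le fun k => ?_
      rintro y ⟨w, rfl⟩
      have hzw : P (Z k w) = Z k (P w) := by
        have := DFunLike.congr_fun (hPZ k) w
        simpa using this
      have hzw' : (P : G →ₗ[ℂ] G) ((Z k : G →ₗ[ℂ] G) w) = Z k (P w) := hzw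
      rw [Submodule.mem_comap, hzw']
      exact le_iSup (fun k => LinearMap.range (Z k : G →ₗ[ℂ] G)) k ⟨P w, rfl⟩
    exact hle hx
  -- P v ∈ ℂ ∙ v
  have hPv : P v ∈ (ℂ ∙ v) := by
    have hmem : P v ∈ ((ℂ ∙ v)ᗮ)ᗮ := by
      rw [Submodule.mem_orthogonal]
      intro u hu
      have h1 : ⟪u, P v⟫_ℂ = ⟪P u, v⟫_ℂ := (hPsa.isSymmetric u v).symm
      rw [← hrange] at hu
      have h2 : P u ∈ (ℂ ∙ v)ᗮ := by rw [← hrange]; exact hPM u hu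
      rw [h1]
      exact (Submodule.mem_orthogonal' _ _).mp h2 v (Submodule.mem_span_singleton_self v)
    haveI : CompleteSpace (ℂ ∙ v) := FiniteDimensional.complete ℂ _
    rwa [Submodule.orthogonal_orthogonal] at hmem
  obtain ⟨c, hc⟩ := Submodule.mem_span_singleton.mp hPv
  -- c is idempotent
  have hvne : v ≠ 0 := by intro h; rw [h, norm_zero] at hv; norm_num at hv
  have hcc : c = 0 ∨ c = 1 := by
    have h1 : P (P v) = P v := by
      have := DFunLike.congr_fun hP v
      simpa using this
    rw [← hc, map_smul, ← hc, smul_smul] at h1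
    have h2 : (c * c) • v = c • v := h1
    have h3 : c * c = c := by
      have h4 : (c * c - c) • v = 0 := by rw [sub_smul, h2, sub_self]
      rcases smul_eq_zero.mp h4 with h | h
      · exact sub_eq_zero.mp h
      · exact absurd h hvne
    have h5 : c * (c - 1) = 0 := by ring_nf; linear_combination h3
    rcases mul_eq_zero.mp h5 with h | h
    · exact Or.inl h
    · exact Or.inr (by linear_combination h)
  -- P agrees with c • id everywhere
  have hkey : ∀ x, P x = c • x := by
    have hEqOn : Set.EqOn (⇑P) (fun x => c • x)
        ((Submodule.span ℂ (Set.range (polyEval Z v)) : Submodule ℂ G) : Set G) := by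
      intro x hx
      induction hx using Submodule.span_induction with
      | mem y hy =>
        obtain ⟨f, rfl⟩ := hy
        rw [heval, ← hc]
        simp only [polyEval, map_smul, Finset.smul_sum, smul_comm c]
      | zero => simp
      | add y z _ _ hy hz => simp only [map_add, hy, hz, smul_add]
      | smul a y _ hy => simp only [map_smul, hy, smul_comm a c]
    have := Continuous.ext_on hdense P.continuous (continuous_const_smul c) hEqOn
    exact fun x => congrFun this x
  rcases hcc with h | h
  · left; ext x; simp [hkey x, h]
  · right; ext x; simp [hkey x, h]
end

section
/- Classification of reducing submodules of a standard Hilbert module. Let G be a complex Hilbert space, Z₁,…,Z_d commuting bounded operators on G, and v ∈ G a unit vector such that {f(Z₁,…,Z_d)v : f ∈ ℂ[z₁,…,z_d]} has dense linear span in G and Z₁G + ⋯ + Z_dG is a closed subspace equal to the orthogonal complement of ℂ·v. Let S be the ℓ²-direct sum of r copies of G (r a positive integer), with the diagonal operators Z̃_k(x₁,…,x_r) = (Z_kx₁,…,Z_kx_r). Then for every closed subspace N ⊆ S satisfying Z̃_kN ⊆ N and Z̃_k*N ⊆ N for all k, there exists a linear subspace F ⊆ ℂ^r such that N = {(x₁,…,x_r)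 ∈ S : for every c = (c₁,…,c_r) ∈ ℂ^r orthogonal to F, c̄₁x₁ + ⋯ + c̄_rx_r = 0}. -/
set_option synthInstance.maxHeartbeats 1000000
set_option maxHeartbeats 1000000

open ContinuousLinearMap

/-- The `ℓ²`-direct sum of finitely many copies of a complete space is complete
(the `PiLp` uniformity is definitionally the product uniformity). -/
instance pilpCompleteSpace {G : Type*} [NormedAddCommGroup G] [InnerProductSpace ℂ G]
    [CompleteSpace G] (r : ℕ) : CompleteSpace (PiLp 2 fun _ : Fin r => G) :=
  inferInstance

/-- The diagonal (multiplicity `r`) version of an operator `T`, acting on the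
`ℓ²`-direct sum of `r` copies of `G`. -/
noncomputable def diagOp {G : Type*} [NormedAddCommGroup G] [InnerProductSpace ℂ G]
    [CompleteSpace G] (r : ℕ) (T : G →L[ℂ] G) :
    (PiLp 2 fun _ : Fin r => G) →L[ℂ] (PiLp 2 fun _ : Fin r => G) :=
  ((PiLp.continuousLinearEquiv 2 ℂ fun _ : Fin r => G).symm : (∀ _ : Fin r, G) →L[ℂ] _) ∘L
    (ContinuousLinearMap.pi fun i => T ∘L ContinuousLinearMap.proj i) ∘L
    ((PiLp.continuousLinearEquiv 2 ℂ fun _ : Fin r => G) : _ →L[ℂ] (∀ _ : Fin r, G))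

section Aux

set_option linter.unusedSectionVars false

local notation "⟪" x ", " y "⟫" => @inner ℂ _ _ x y

variable {G : Type*} [NormedAddCommGroup G] [InnerProductSpace ℂ G] [CompleteSpace G] {r : ℕ}

lemma diagOp_apply (T : G →L[ℂ] G) (x : PiLp 2 fun _ : Fin r => G) (i : Fin r) :
    diagOp r T x i = T (x i) := rfl

/-- The elementary tensor `g ⊗ c` in the direct sum. -/
noncomputable def emb (r : ℕ) (g : G) (c : EuclideanSpace ℂ (Fin r)) :
    PiLp 2 fun _ : Fin r => G := WithLp.toLp 2 (fun i => c i • g)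

lemma emb_apply (g : G) (c : EuclideanSpace ℂ (Fin r)) (i : Fin r) :
    emb r g c i = c i • g := rfl

lemma adjoint_diagOp (T : G →L[ℂ] G) : adjoint (diagOp r T) = diagOp r (adjoint T) := by
  symm
  rw [ContinuousLinearMap.eq_adjoint_iff]
  intro x y
  simp [PiLp.inner_apply, diagOp_apply, adjoint_inner_left]

lemma diagOp_mul_apply (A B : G →L[ℂ] G) (x : PiLp 2 fun _ : Fin r => G) :
    diagOp r (A * B) x = diagOp r A (diagOp r B x) := rfl

lemma pow_inv (M : Submodule ℂ (PiLp 2 fun _ : Fin r => G)) (T : G →L[ℂ] G)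
    (h : ∀ x ∈ M, diagOp r T x ∈ M) (n : ℕ) : ∀ x ∈ M, diagOp r (T ^ n) x ∈ M := by
  induction n with
  | zero => intro x hx; rw [pow_zero]; exact hx
  | succ n ih =>
    intro x hx
    rw [pow_succ, diagOp_mul_apply]
    exact ih _ (h x hx)

lemma listprod_pointwise (L : List (G →L[ℂ] G)) (x : PiLp 2 fun _ : Fin r => G) (i : Fin r) :
    (L.map (diagOp r)).prod x i = L.prod (x i) := by
  induction L generalizing x with
  | nil => simp
  | cons a l ih =>
    simp only [List.map_cons, List.prod_cons, ContinuousLinearMap.mul_apply]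
    rw [show (diagOp r a) ((List.map (diagOp r) l).prod x) i
        = a ((List.map (diagOp r) l).prod x i) from rfl, ih]

lemma listprod_inv (M : Submodule ℂ (PiLp 2 fun _ : Fin r => G)) (L : List (G →L[ℂ] G))
    (hL : ∀ A ∈ L, ∀ x ∈ M, diagOp r A x ∈ M) :
    ∀ x ∈ M, (L.map (diagOp r)).prod x ∈ M := by
  induction L with
  | nil => simpa using fun x hx => hx
  | cons a l ih =>
    intro x hx
    simp only [List.map_cons, List.prod_cons, ContinuousLinearMap.mul_apply]
    exact hL a (by simp) _ (ih (fun A hA => hL A (by simp [hA])) x hx)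

/-- Lemma A: a closed submodule of the direct sum which is invariant under the diagonal
operators and contains `v ⊗ c` contains `g ⊗ c` for every `g`. -/
lemma lemA {d : ℕ} (Z : Fin d → G →L[ℂ] G) (v : G)
    (hdense : Dense ((Submodule.span ℂ (Set.range (polyEval Z v)) : Submodule ℂ G) : Set G))
    (M : Submodule ℂ (PiLp 2 fun _ : Fin r => G))
    (hMc : IsClosed (M : Set (PiLp 2 fun _ : Fin r => G)))
    (hinv : ∀ k, ∀ x ∈ M, diagOp r (Z k) x ∈ M)
    (c : EuclideanSpace ℂ (Fin r)) (hc : emb r v c ∈ M) (g : G) : emb r g c ∈ M := by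
  classical
  set embL : G →L[ℂ] (PiLp 2 fun _ : Fin r => G) :=
    ((PiLp.continuousLinearEquiv 2 ℂ fun _ : Fin r => G).symm : (∀ _ : Fin r, G) →L[ℂ] _) ∘L
      (ContinuousLinearMap.pi fun i => c i • ContinuousLinearMap.id ℂ G) with hembL
  have hembL_eq : ∀ w : G, embL w = emb r w c := fun w => rfl
  set M' : Submodule ℂ G := M.comap (embL : G →ₗ[ℂ] _) with hM'
  have hM'c : IsClosed (M' : Set G) := hMc.preimage embL.continuous
  have hsub : Set.range (polyEval Z v) ⊆ (M' : Set G) := by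
    rintro - ⟨f, rfl⟩
    show embL (polyEval Z v f) ∈ M
    rw [polyEval, map_sum]
    refine M.sum_mem fun α _ => ?_
    rw [map_smul]
    refine M.smul_mem _ ?_
    have key : embL ((List.ofFn fun i => (Z i) ^ (α i)).prod v)
        = ((List.ofFn fun i => (Z i) ^ (α i)).map (diagOp r)).prod (emb r v c) := by
      refine PiLp.ext fun j => ?_
      rw [listprod_pointwise]
      show c j • ((List.ofFn fun i => (Z i) ^ (α i)).prod v)
        = (List.ofFn fun i => (Z i) ^ (α i)).prod (c j • v)
      rw [map_smul]
    rw [key]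
    refine listprod_inv M _ ?_ _ hc
    intro A hA x hx
    obtain ⟨k, rfl⟩ := List.mem_ofFn.mp hA
    exact pow_inv M (Z k) (hinv k) _ x hx
  have h1 : ((Submodule.span ℂ (Set.range (polyEval Z v)) : Submodule ℂ G) : Set G) ⊆ M' :=
    Submodule.span_le.mpr hsub
  have h2 : closure ((Submodule.span ℂ (Set.range (polyEval Z v)) : Submodule ℂ G) : Set G)
      ⊆ (M' : Set G) := closure_minimal h1 hM'c
  rw [hdense.closure_eq] at h2
  exact h2 (Set.mem_univ g)

end Aux

/-- Classification of the reducing submodules of a standard Hilbert module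
`S = G ⊗ ℂ^r`: they are exactly the subspaces `G ⊗ F` for `F ⊆ ℂ^r`. -/
theorem stmt1 {G : Type*} [NormedAddCommGroup G] [InnerProductSpace ℂ G] [CompleteSpace G]
    {d : ℕ} (Z : Fin d → G →L[ℂ] G)
    (hcomm : ∀ j k, Z j ∘L Z k = Z k ∘L Z j)
    (v : G) (hv : ‖v‖ = 1)
    (hdense : Dense ((Submodule.span ℂ (Set.range (polyEval Z v)) : Submodule ℂ G) : Set G))
    (hrange : (⨆ k, LinearMap.range (Z k : G →ₗ[ℂ] G) : Submodule ℂ G) = (ℂ ∙ v)ᗮ)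
    (r : ℕ) (hr : 0 < r)
    (N : Submodule ℂ (PiLp 2 fun _ : Fin r => G))
    (hNclosed : IsClosed (N : Set (PiLp 2 fun _ : Fin r => G)))
    (hNinv : ∀ k, ∀ x ∈ N, diagOp r (Z k) x ∈ N)
    (hNadj : ∀ k, ∀ x ∈ N, adjoint (diagOp r (Z k)) x ∈ N) :
    ∃ F : Submodule ℂ (EuclideanSpace ℂ (Fin r)),
      (N : Set (PiLp 2 fun _ : Fin r => G)) =
        {x | ∀ c ∈ Fᗮ, ∑ i, (starRingEnd ℂ) (c i) • x i = 0} := by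
  classical
  haveI : CompleteSpace N := hNclosed.completeSpace_coe
  -- the subspace F of ℂ^r
  set embCL : EuclideanSpace ℂ (Fin r) →ₗ[ℂ] (PiLp 2 fun _ : Fin r => G) :=
    { toFun := fun c => emb r v c
      map_add' := by
        intro c c'; refine PiLp.ext fun i => ?_
        show (c + c') i • v = emb r v c i + emb r v c' i
        simp [emb_apply, add_smul]
      map_smul' := by
        intro a c; refine PiLp.ext fun i => ?_
        show (a • c) i • v = a • emb r v c i
        simp [emb_apply, smul_smul] } with hembCL
  set F : Submodule ℂ (EuclideanSpace ℂ (Fin r)) := N.comap embCL with hF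
  have hFmem : ∀ c : EuclideanSpace ℂ (Fin r), c ∈ F ↔ emb r v c ∈ N := fun c => Iff.rfl
  -- v is orthogonal to all ranges
  have hZv : ∀ k (w : G), @inner ℂ _ _ ((Z k) w) v = 0 := by
    intro k w
    have h : Z k w ∈ (ℂ ∙ v)ᗮ := by
      rw [← hrange]
      exact (le_iSup (fun k => LinearMap.range (Z k : G →ₗ[ℂ] G)) k) (LinearMap.mem_range_self _ w)
    exact (Submodule.mem_orthogonal' _ _).mp h v (Submodule.mem_span_singleton_self v)
  -- the orthogonal complement of N is invariant under the diagonal operators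
  have hNoinv : ∀ k, ∀ m ∈ Nᗮ, diagOp r (Z k) m ∈ Nᗮ := by
    intro k m hm
    rw [Submodule.mem_orthogonal]
    intro u hu
    rw [← adjoint_adjoint (diagOp r (Z k)), adjoint_inner_right]
    exact (Submodule.mem_orthogonal _ _).mp hm _ (hNadj k u hu)
  -- ℂ ∙ v instances
  haveI : CompleteSpace (ℂ ∙ v) := FiniteDimensional.complete ℂ _
  -- Lemma B : if c ⊥ F then v ⊗ c ∈ Nᗮ
  have hB : ∀ c ∈ Fᗮ, emb r v c ∈ Nᗮ := by
    intro c hcF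
    set n : PiLp 2 fun _ : Fin r => G :=
      ((Submodule.orthogonalProjectionOnto N (emb r v c) : N) : PiLp 2 fun _ : Fin r => G) with hn_def
    have hnN : n ∈ N := SetLike.coe_mem _
    have hmO : emb r v c - n ∈ Nᗮ := Submodule.sub_starProjection_mem_orthogonal (K := N) (emb r v c)
    have key : ∀ k (y : PiLp 2 fun _ : Fin r => G),
        @inner ℂ _ _ (diagOp r (Z k) y) n = 0 := by
      intro k y
      set yN : PiLp 2 fun _ : Fin r => G :=
        ((Submodule.orthogonalProjectionOnto N y : N) : PiLp 2 fun _ : Fin r => G) with hyN_def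
      have hyN : yN ∈ N := SetLike.coe_mem _
      have hyO : y - yN ∈ Nᗮ := Submodule.sub_starProjection_mem_orthogonal (K := N) y
      have hsplit : diagOp r (Z k) y = diagOp r (Z k) yN + diagOp r (Z k) (y - yN) := by
        rw [← map_add]; congr 1; abel
      rw [hsplit, inner_add_left]
      have ht2 : @inner ℂ _ _ (diagOp r (Z k) (y - yN)) n = 0 := by
        rw [← adjoint_inner_right]
        exact (Submodule.mem_orthogonal' _ _).mp hyO _ (hNadj k n hnN)
      have ht1 : @inner ℂ _ _ (diagOp r (Z k) yN) n = 0 := by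
        have hsplit2 : (n : PiLp 2 fun _ : Fin r => G) = emb r v c - (emb r v c - n) := by abel
        rw [hsplit2, inner_sub_right]
        have ha : @inner ℂ _ _ (diagOp r (Z k) yN) (emb r v c) = 0 := by
          rw [PiLp.inner_apply]
          refine Finset.sum_eq_zero fun i _ => ?_
          rw [diagOp_apply, emb_apply, inner_smul_right]
          rw [show @inner ℂ _ _ ((Z k) (yN i)) v = 0 from hZv k (yN i), mul_zero]
        have hb' : @inner ℂ _ _ (diagOp r (Z k) yN) (emb r v c - n) = 0 :=
          (Submodule.mem_orthogonal _ _).mp hmO _ (hNinv k yN hyN)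
        rw [ha, hb', sub_zero]
      rw [ht1, ht2, add_zero]
    -- each component of n lies in ℂ ∙ v
    have hcomp : ∀ i, n i ∈ (ℂ ∙ v) := by
      intro i
      have hio : n i ∈ ((⨆ k, LinearMap.range (Z k : G →ₗ[ℂ] G) : Submodule ℂ G))ᗮ := by
        rw [Submodule.mem_orthogonal]
        intro u hu
        refine Submodule.iSup_induction (motive := fun u => @inner ℂ _ _ u (n i) = 0) _ hu
          (fun k w hw => ?_) (by simp) (fun a b ha hb => by
            simp only [] at ha hb ⊢; rw [inner_add_left, ha, hb, add_zero])
        obtain ⟨g, rfl⟩ := hw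
        simp only []
        set y : PiLp 2 fun _ : Fin r => G := WithLp.toLp 2 (fun j => if j = i then g else 0) with hy
        have h0 := key k y
        rw [PiLp.inner_apply] at h0
        have hsum : ∑ j, @inner ℂ _ _ (diagOp r (Z k) y j) (n j)
            = @inner ℂ _ _ ((Z k) g) (n i) := by
          rw [Finset.sum_eq_single i]
          · rw [diagOp_apply]
            congr 1
            show (Z k) (if i = i then g else 0) = (Z k) g
            rw [if_pos rfl]
          · intro b _ hb
            rw [diagOp_apply]
            have : y b = 0 := if_neg hb
            rw [show (y b : G) = 0 from this, map_zero, inner_zero_left]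
          · intro h; exact absurd (Finset.mem_univ i) h
        rw [hsum] at h0
        exact h0
      rw [hrange, Submodule.orthogonal_orthogonal] at hio
      exact hio
    choose c' hc' using fun i => Submodule.mem_span_singleton.mp (hcomp i)
    have hc'F : (WithLp.toLp 2 c' : EuclideanSpace ℂ (Fin r)) ∈ F := by
      rw [hFmem]
      have : emb r v (WithLp.toLp 2 c' : EuclideanSpace ℂ (Fin r)) = n := PiLp.ext fun i => hc' i
      rw [this]; exact hnN
    have hcc' : @inner ℂ _ _ c (WithLp.toLp 2 c' : EuclideanSpace ℂ (Fin r)) = 0 :=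
      (Submodule.mem_orthogonal' _ _).mp hcF _ hc'F
    have hinner : @inner ℂ _ _ (emb r v c) n = 0 := by
      rw [PiLp.inner_apply]
      have : ∀ i : Fin r, @inner ℂ _ _ (emb r v c i) (n i)
          = ((starRingEnd ℂ) (c i) * c' i) * @inner ℂ _ _ v v := by
        intro i
        rw [emb_apply, ← hc' i, inner_smul_left, inner_smul_right, mul_assoc]
      rw [Finset.sum_congr rfl (fun i _ => this i), ← Finset.sum_mul]
      have hE : ∑ i, (starRingEnd ℂ) (c i) * c' i = @inner ℂ _ _ c (WithLp.toLp 2 c' : EuclideanSpace ℂ (Fin r)) := by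
        rw [PiLp.inner_apply]
        exact Finset.sum_congr rfl fun i _ => by simp [mul_comm]
      rw [hE, hcc', zero_mul]
    have hnn : @inner ℂ _ _ n n = 0 := by
      have h1 : @inner ℂ _ _ (emb r v c - n) n = 0 :=
        (Submodule.mem_orthogonal' _ _).mp hmO n hnN
      rw [inner_sub_left, hinner, zero_sub, neg_eq_zero] at h1
      exact h1
    have hn0 : n = 0 := inner_self_eq_zero.mp hnn
    have : emb r v c = emb r v c - n := by rw [hn0, sub_zero]
    rw [this]
    exact hmO
  -- from Lemma B and Lemma A : all of G ⊗ c is in Nᗮ for c ⊥ F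
  have hGc : ∀ c ∈ Fᗮ, ∀ g : G, emb r g c ∈ Nᗮ := fun c hc g =>
    lemA Z v hdense Nᗮ N.isClosed_orthogonal hNoinv c (hB c hc) g
  -- conclusion
  refine ⟨F, ?_⟩
  ext x
  simp only [Set.mem_setOf_eq, SetLike.mem_coe]
  constructor
  · intro hx c hc
    have hg : ∀ g : G, @inner ℂ _ _ g (∑ i, (starRingEnd ℂ) (c i) • x i) = 0 := by
      intro g
      have h1 : @inner ℂ _ _ x (emb r g c) = 0 :=
        (Submodule.mem_orthogonal _ _).mp (hGc c hc g) x hx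
      have h2 : @inner ℂ _ _ (emb r g c) x = 0 := by
        rw [← inner_conj_symm, h1, map_zero]
      calc @inner ℂ _ _ g (∑ i, (starRingEnd ℂ) (c i) • x i)
          = ∑ i, (starRingEnd ℂ) (c i) * @inner ℂ _ _ g (x i) := by
            rw [inner_sum]
            exact Finset.sum_congr rfl fun i _ => inner_smul_right _ _ _
        _ = @inner ℂ _ _ (emb r g c) x := by
            rw [PiLp.inner_apply]
            exact (Finset.sum_congr rfl fun i _ => by
              rw [emb_apply, inner_smul_left]).symm
        _ = 0 := h2
    exact inner_self_eq_zero.mp (hg _)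
  · intro hx
    -- reconstruct x from an orthonormal basis of F
    haveI : FiniteDimensional ℂ F := inferInstance
    haveI : CompleteSpace F := FiniteDimensional.complete ℂ _
    set b := stdOrthonormalBasis ℂ F with hb
    set m : EuclideanSpace ℂ (Fin r) → G := fun c => ∑ i, (starRingEnd ℂ) (c i) • x i with hm
    have m_add : ∀ c c', m (c + c') = m c + m c' := by
      intro c c'
      simp only [hm]
      rw [← Finset.sum_add_distrib]
      refine Finset.sum_congr rfl fun i _ => ?_
      show (starRingEnd ℂ) ((c + c') i) • x i = _
      rw [show (c + c') i = c i + c' i from rfl, map_add, add_smul]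
    have m_sum : ∀ {ι : Type} [Fintype ι] (a : ι → ℂ) (w : ι → EuclideanSpace ℂ (Fin r)),
        m (∑ j, a j • w j) = ∑ j, (starRingEnd ℂ) (a j) • m (w j) := by
      intro ι _ a w
      simp only [hm]
      have hap : ∀ i : Fin r, (∑ j, a j • w j) i = ∑ j, a j * w j i := by
        intro i
        rw [show (∑ j, a j • w j) i = ∑ j, (a j • w j) i from
          by rw [WithLp.ofLp_sum]; exact Finset.sum_apply i Finset.univ _]
        rfl
      calc ∑ i, (starRingEnd ℂ) ((∑ j, a j • w j) i) • x i
          = ∑ i, ∑ j, ((starRingEnd ℂ) (a j) * (starRingEnd ℂ) (w j i)) • x i := by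
            refine Finset.sum_congr rfl fun i _ => ?_
            rw [hap, map_sum, Finset.sum_smul]
            exact Finset.sum_congr rfl fun j _ => by rw [map_mul]
        _ = ∑ j, ∑ i, ((starRingEnd ℂ) (a j) * (starRingEnd ℂ) (w j i)) • x i :=
            Finset.sum_comm
        _ = ∑ j, (starRingEnd ℂ) (a j) • ∑ i, (starRingEnd ℂ) (w j i) • x i := by
            refine Finset.sum_congr rfl fun j _ => ?_
            rw [Finset.smul_sum]
            exact Finset.sum_congr rfl fun i _ => by rw [mul_smul]
    have m_single : ∀ i, m (EuclideanSpace.single i 1) = x i := by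
      intro i
      simp only [hm]
      rw [Finset.sum_eq_single i]
      · rw [show (EuclideanSpace.single i 1 : EuclideanSpace ℂ (Fin r)) i = 1 by
          simp [EuclideanSpace.single_apply]]
        simp
      · intro j _ hj
        rw [show (EuclideanSpace.single i 1 : EuclideanSpace ℂ (Fin r)) j = 0 by
          simp [EuclideanSpace.single_apply, hj]]
        simp
      · intro h; exact absurd (Finset.mem_univ i) h
    have hxeq : x = ∑ j, emb r (m ((b j : F) : EuclideanSpace ℂ (Fin r)))
        ((b j : F) : EuclideanSpace ℂ (Fin r)) := by
      refine PiLp.ext fun i => ?_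
      have h1 : x i = m (EuclideanSpace.single i 1) := (m_single i).symm
      set u : EuclideanSpace ℂ (Fin r) :=
        (Submodule.orthogonalProjectionOnto F (EuclideanSpace.single i 1) : EuclideanSpace ℂ (Fin r)) with hu
      have hw : EuclideanSpace.single i 1 - u ∈ Fᗮ :=
        Submodule.sub_starProjection_mem_orthogonal (K := F) _
      have h0 : m (EuclideanSpace.single i 1 - u) = 0 := by
        simp only [hm]
        exact hx _ hw
      have h2 : m (EuclideanSpace.single i 1) = m u := by
        have hd : (EuclideanSpace.single i 1 : EuclideanSpace ℂ (Fin r))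
            = u + (EuclideanSpace.single i 1 - u) := by abel
        rw [hd, m_add, h0, add_zero]
      have h3 : u = ∑ j, @inner ℂ _ _ ((b j : F) : EuclideanSpace ℂ (Fin r))
          (EuclideanSpace.single i 1) • ((b j : F) : EuclideanSpace ℂ (Fin r)) := by
        rw [hu, b.orthogonalProjectionOnto_apply_eq_sum]
        push_cast
        rfl
      have h4 : m u = ∑ j, (starRingEnd ℂ) (@inner ℂ _ _ ((b j : F) : EuclideanSpace ℂ (Fin r))
          (EuclideanSpace.single i 1)) • m ((b j : F) : EuclideanSpace ℂ (Fin r)) := by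
        rw [h3, m_sum]
      have h5 : ∀ j, (starRingEnd ℂ) (@inner ℂ _ _ ((b j : F) : EuclideanSpace ℂ (Fin r))
          (EuclideanSpace.single i 1)) = ((b j : F) : EuclideanSpace ℂ (Fin r)) i := by
        intro j
        rw [inner_conj_symm, EuclideanSpace.inner_single_left, map_one, one_mul]
      have h6 : (∑ j, emb r (m ((b j : F) : EuclideanSpace ℂ (Fin r)))
          ((b j : F) : EuclideanSpace ℂ (Fin r))) i
          = ∑ j, ((b j : F) : EuclideanSpace ℂ (Fin r)) i •
            m ((b j : F) : EuclideanSpace ℂ (Fin r)) := by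
        rw [show (∑ j, emb r (m ((b j : F) : EuclideanSpace ℂ (Fin r)))
            ((b j : F) : EuclideanSpace ℂ (Fin r))) i
          = ∑ j, emb r (m ((b j : F) : EuclideanSpace ℂ (Fin r)))
            ((b j : F) : EuclideanSpace ℂ (Fin r)) i from by
              rw [WithLp.ofLp_sum]; exact Finset.sum_apply i Finset.univ _]
        rfl
      rw [h1, h2, h4, h6]
      exact Finset.sum_congr rfl fun j _ => by rw [h5 j]
    rw [hxeq]
    refine N.sum_mem fun j _ => ?_
    refine lemA Z v hdense N hNclosed hNinv _ ?_ _
    exact (hFmem _).mp (SetLike.coe_mem (b j))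
end

section
/- Riesz projection commutator lemma. Let B be a positive bounded operator on a complex Hilbert space K whose range N = B(K) is closed, let P_N be the orthogonal projection onto N, and let Y be a bounded operator on K such that the commutator YB − BY is compact. Then YP_N − P_NY is compact. -/
set_option synthInstance.maxHeartbeats 1000000
set_option maxHeartbeats 1000000

open ContinuousLinearMap

/-- Algebraic commutator identity in a ring. -/
lemma ring_aux {R : Type*} [Ring R] (B P C Y : R) (h1 : P*B = B) (h2 : B*P = B)
    (h3 : B*C = P) (h4 : C*B = P) :
    Y*P - P*Y = (1-P)*((Y*B-B*Y)*C) + C*((Y*B-B*Y)*(1-P)) := by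
  have : (1-P)*((Y*B-B*Y)*C) + C*((Y*B-B*Y)*(1-P))
      = Y*(B*C) - B*Y*C - P*Y*(B*C) + (P*B)*Y*C
        + C*Y*B - (C*B)*Y - C*Y*(B*P) + (C*B)*(Y*P) := by noncomm_ring
  rw [this, h1, h2, h3, h4]
  noncomm_ring

/-- Riesz projection commutator lemma: if `B` is a positive operator with closed range
`N = B(K)`, `P` is the orthogonal projection onto `N` (the selfadjoint idempotent with
range `N`), and `Y` commutes with `B` modulo compacts, then `Y` commutes with `P`
modulo compacts. -/
theorem stmt7 {K : Type*} [NormedAddCommGroup K] [InnerProductSpace ℂ K] [CompleteSpace K]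
    (B : K →L[ℂ] K) (hB : B.IsPositive)
    (hrange : IsClosed ((LinearMap.range (B : K →ₗ[ℂ] K) : Submodule ℂ K) : Set K))
    (P : K →L[ℂ] K) (hP : IsIdempotentElem P) (hPsa : IsSelfAdjoint P)
    (hPrange : LinearMap.range (P : K →ₗ[ℂ] K) = LinearMap.range (B : K →ₗ[ℂ] K))
    (Y : K →L[ℂ] K) (hYB : IsCompactOperator ⇑(Y ∘L B - B ∘L Y)) :
    IsCompactOperator ⇑(Y ∘L P - P ∘L Y) := by
  set N : Submodule ℂ K := LinearMap.range (B : K →ₗ[ℂ] K) with hN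
  haveI : CompleteSpace N := hrange.completeSpace_coe
  have hBsa : IsSelfAdjoint B := hB.isSelfAdjoint
  -- P fixes elements of N = range B
  have hPfix : ∀ x ∈ N, P x = x := by
    intro x hx
    rw [← hPrange] at hx
    obtain ⟨y, rfl⟩ := hx
    have := DFunLike.congr_fun hP y
    simpa [mul_apply] using this
  have hPB : P * B = B := by
    ext x
    exact hPfix (B x) (LinearMap.mem_range_self _ x)
  have hBP : B * P = B := by
    have : (P * B) = B := hPB
    have h := congrArg star hPB
    rwa [star_mul, hPsa.star_eq, hBsa.star_eq] at h
  -- the restriction of B to N as an operator on N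
  have hmemB : ∀ x : N, B x ∈ N := fun x => LinearMap.mem_range_self _ _
  set B' : N →L[ℂ] N := (B ∘L N.subtypeL).codRestrict N (fun x => hmemB x) with hB'
  have hB'inj : LinearMap.ker (B' : N →ₗ[ℂ] N) = ⊥ := by
    rw [LinearMap.ker_eq_bot']
    rintro ⟨x, hx⟩ h
    have hBx : B x = 0 := congrArg Subtype.val h
    obtain ⟨y, rfl⟩ := hx
    replace hBx : B (B y) = 0 := hBx
    have : (inner ℂ (B y) (B y) : ℂ) = inner ℂ y (B (B y)) := by
      nth_rewrite 1 [← hBsa.adjoint_eq]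
      exact ContinuousLinearMap.adjoint_inner_left B (B y) y
    rw [hBx, inner_zero_right] at this
    have : B y = 0 := inner_self_eq_zero.mp this
    exact Subtype.ext this
  have hB'surj : LinearMap.range (B' : N →ₗ[ℂ] N) = ⊤ := by
    rw [LinearMap.range_eq_top]
    rintro ⟨x, hx⟩
    obtain ⟨y, rfl⟩ := hx
    have hPy : P y ∈ N := hPrange ▸ LinearMap.mem_range_self _ y
    refine ⟨⟨P y, hPy⟩, ?_⟩
    apply Subtype.ext
    show B (P y) = B y
    exact DFunLike.congr_fun hBP y
  set e : N ≃L[ℂ] N := ContinuousLinearEquiv.ofBijective B' hB'inj hB'surj with he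
  have hmemP : ∀ x : K, P x ∈ N := fun x => hPrange ▸ LinearMap.mem_range_self _ x
  set C : K →L[ℂ] K :=
    N.subtypeL ∘L (e.symm : N →L[ℂ] N) ∘L (P.codRestrict N hmemP) with hC
  have heval : ∀ x : N, e x = ⟨B x, hmemB x⟩ := fun x => rfl
  have hBC : B * C = P := by
    ext x
    show B ((e.symm ⟨P x, hmemP x⟩ : N) : K) = P x
    have : e (e.symm ⟨P x, hmemP x⟩) = ⟨P x, hmemP x⟩ := e.apply_symm_apply _
    rw [heval] at this
    exact congrArg Subtype.val this
  have hCB : C * B = P := by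
    ext x
    show ((e.symm ⟨P (B x), hmemP (B x)⟩ : N) : K) = P x
    have h1 : P (B x) = B (P x) := by
      have ha := DFunLike.congr_fun hPB x
      have hb := DFunLike.congr_fun hBP x
      change P (B x) = B x at ha
      change B (P x) = B x at hb
      rw [ha, hb]
    have h2 : (⟨P (B x), hmemP (B x)⟩ : N) = e ⟨P x, hmemP x⟩ := by
      rw [heval]; exact Subtype.ext h1
    rw [h2, e.symm_apply_apply]
  -- the key identity
  have key : Y ∘L P - P ∘L Y
      = (1 - P) ∘L ((Y ∘L B - B ∘L Y) ∘L C) + C ∘L ((Y ∘L B - B ∘L Y) ∘L (1 - P)) := by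
    exact ring_aux B P C Y hPB hBP hBC hCB
  rw [key]
  have h1 : IsCompactOperator ⇑((1 - P) ∘L ((Y ∘L B - B ∘L Y) ∘L C)) := by
    exact ((hYB.comp_clm C).clm_comp (1 - P))
  have h2 : IsCompactOperator ⇑(C ∘L ((Y ∘L B - B ∘L Y) ∘L (1 - P))) := by
    exact ((hYB.comp_clm (1 - P)).clm_comp C)
  exact h1.add h2
end

section
/- Instability of essential normality under similarity. Let (u_n)_{n≥0} be a sequence of real numbers such that (u_n, u_{n+1}) = (0,1) for infinitely many n and such that the partial sums satisfy |u₀ + u₁ + ⋯ + u_n| ≤ C < ∞ for all n. Set λ_n = exp(u₀ + u₁ + ⋯ + u_n). Let H be a complex Hilbert space with orthonormal basis (e_n)_{n≥0}, and let A, B, L be bounded operators on H satisfying A e_n = e_{n+1}, B e_n = e^{u_{n+1}} e_{n+1}, and L e_n = λ_n e_n for all n ≥ 0. Then: (a) L is invertible; (b) LA = BL; (c) A*A − AA* is the rank-one orthogonal projection onto ℂ·e₀ (in particular A is essentially normal); and (d) B*B − BB* is not a compact operator. -/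
set_option synthInstance.maxHeartbeats 1000000
set_option maxHeartbeats 1000000

open ContinuousLinearMap

local notation "⟪" x ", " y "⟫" => @inner ℂ _ _ x y

section Aux

variable {H : Type*} [NormedAddCommGroup H] [InnerProductSpace ℂ H] [CompleteSpace H]

lemma aux_basis_vec_ext (e : HilbertBasis ℕ ℂ H) {x y : H}
    (h : ∀ n, ⟪e n, x⟫ = ⟪e n, y⟫) : x = y := by
  apply e.repr.injective
  apply lp.ext
  funext n
  show e.repr x n = e.repr y n
  rw [e.repr_apply_apply, e.repr_apply_apply]
  exact h n

lemma aux_clm_ext (e : HilbertBasis ℕ ℂ H) {f g : H →L[ℂ] H}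
    (h : ∀ n, f (e n) = g (e n)) : f = g := by
  refine ContinuousLinearMap.coeFn_injective ?_
  have hdense : Dense ((Submodule.span ℂ (Set.range ⇑e) : Submodule ℂ H) : Set H) :=
    Submodule.dense_iff_topologicalClosure_eq_top.mpr e.dense_span
  refine Continuous.ext_on hdense f.continuous g.continuous ?_
  intro x hx
  refine LinearMap.eqOn_span ?_ hx
  rintro _ ⟨n, rfl⟩
  exact h n

lemma aux_parseval (e : HilbertBasis ℕ ℂ H) (x : H) :
    HasSum (fun n => ‖(⟪e n, x⟫ : ℂ)‖ ^ 2) (‖x‖ ^ 2) := by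
  have h := (e.hasSum_inner_mul_inner x x).mapL Complex.reCLM
  have h1 : (fun n => Complex.reCLM (⟪x, e n⟫ * ⟪e n, x⟫)) =
      fun n => ‖(⟪e n, x⟫ : ℂ)‖ ^ 2 := by
    funext n
    have hc : (⟪x, e n⟫ : ℂ) = starRingEnd ℂ (⟪e n, x⟫ : ℂ) := (inner_conj_symm _ _).symm
    rw [hc, mul_comm, Complex.mul_conj, Complex.reCLM_apply, Complex.ofReal_re,
      Complex.normSq_eq_norm_sq]
  have h2 : Complex.reCLM ⟪x, x⟫ = ‖x‖ ^ 2 := by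
    rw [Complex.reCLM_apply]
    have h3 := inner_self_eq_norm_sq (𝕜 := ℂ) x
    simpa [RCLike.re_to_complex] using h3
  rwa [h1, h2] at h

end Aux

/-- Instability of essential normality under similarity: for a sequence `u` with
`(u n, u (n+1)) = (0,1)` infinitely often and uniformly bounded partial sums, the
unweighted shift `A`, the weighted shift `B` with weights `exp (u (n+1))`, and the
diagonal operator `L` with entries `λ_n = exp (u 0 + ⋯ + u n)` satisfy: `L` is
invertible, `L A = B L`, `A*A − AA*` is the rank-one projection onto `ℂ·e₀`
(in particular `A` is essentially normal), while `B*B − BB*` is not compact. -/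
theorem stmt13 {H : Type*} [NormedAddCommGroup H] [InnerProductSpace ℂ H] [CompleteSpace H]
    (u : ℕ → ℝ) (C : ℝ)
    (hosc : ∀ N : ℕ, ∃ n ≥ N, u n = 0 ∧ u (n + 1) = 1)
    (hbdd : ∀ n : ℕ, |∑ k ∈ Finset.range (n + 1), u k| ≤ C)
    (e : HilbertBasis ℕ ℂ H)
    (A B L : H →L[ℂ] H)
    (hA : ∀ n, A (e n) = e (n + 1))
    (hB : ∀ n, B (e n) = (Real.exp (u (n + 1)) : ℂ) • e (n + 1))
    (hL : ∀ n, L (e n) = (Real.exp (∑ k ∈ Finset.range (n + 1), u k) : ℂ) • e n) :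
    (∃ L' : H →L[ℂ] H, L ∘L L' = 1 ∧ L' ∘L L = 1) ∧
    (L ∘L A = B ∘L L) ∧
    ((∀ x : H, (adjoint A ∘L A - A ∘L adjoint A) x = (inner ℂ (e 0) x : ℂ) • e 0) ∧
      IsCompactOperator ⇑(adjoint A ∘L A - A ∘L adjoint A)) ∧
    ¬ IsCompactOperator ⇑(adjoint B ∘L B - B ∘L adjoint B) := by
  have horth : ∀ m n : ℕ, (⟪e m, e n⟫ : ℂ) = if m = n then 1 else 0 :=
    orthonormal_iff_ite.mp e.orthonormal
  set s : ℕ → ℝ := fun n => ∑ k ∈ Finset.range (n + 1), u k with hs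
  set lam : ℕ → ℝ := fun n => Real.exp (s n) with hlam
  have hlampos : ∀ n, 0 < lam n := fun n => Real.exp_pos _
  -- adjoints on basis vectors
  have hLadj : ∀ n, adjoint L (e n) = (lam n : ℂ) • e n := by
    intro n
    apply aux_basis_vec_ext e
    intro m
    rw [adjoint_inner_right, hL m, inner_smul_left, inner_smul_right, Complex.conj_ofReal,
      horth]
    by_cases h : m = n
    · subst h; simp [hlam, hs]
    · simp [h, Ne.symm h]
  have hAadj0 : adjoint A (e 0) = 0 := by
    apply aux_basis_vec_ext e
    intro m
    rw [adjoint_inner_right, hA m, horth]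
    simp
  have hAadjS : ∀ n, adjoint A (e (n + 1)) = e n := by
    intro n
    apply aux_basis_vec_ext e
    intro m
    rw [adjoint_inner_right, hA m, horth, horth]
    simp
  have hBadj0 : adjoint B (e 0) = 0 := by
    apply aux_basis_vec_ext e
    intro m
    rw [adjoint_inner_right, hB m, inner_smul_left, horth]
    simp
  have hBadjS : ∀ n, adjoint B (e (n + 1)) = (Real.exp (u (n + 1)) : ℂ) • e n := by
    intro n
    apply aux_basis_vec_ext e
    intro m
    rw [adjoint_inner_right, hB m, inner_smul_left, inner_smul_right, Complex.conj_ofReal,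
      horth, horth]
    by_cases h : m = n
    · subst h; simp
    · simp [h, Ne.symm h]
  refine ⟨?_, ?_, ⟨?_, ?_⟩, ?_⟩
  · -- (a) invertibility of L
    have hinner : ∀ (x : H) (n : ℕ), (⟪e n, L x⟫ : ℂ) = (lam n : ℂ) * ⟪e n, x⟫ := by
      intro x n
      rw [← adjoint_inner_left, hLadj, inner_smul_left, Complex.conj_ofReal]
    have hlow : ∀ x : H, ‖x‖ ≤ Real.exp C * ‖L x‖ := by
      intro x
      have h1 := aux_parseval e x
      have h2 := (aux_parseval e (L x)).mul_left (Real.exp C ^ 2)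
      have hle : ∀ n, ‖(⟪e n, x⟫ : ℂ)‖ ^ 2 ≤ Real.exp C ^ 2 * ‖(⟪e n, L x⟫ : ℂ)‖ ^ 2 := by
        intro n
        rw [hinner x n, norm_mul, Complex.norm_real, Real.norm_eq_abs,
          abs_of_pos (hlampos n)]
        have hone : 1 ≤ Real.exp C * lam n := by
          rw [hlam, ← Real.exp_add]
          refine Real.one_le_exp ?_
          have := (abs_le.mp (hbdd n)).1
          simp only [hs]
          linarith
        have hn := norm_nonneg (⟪e n, x⟫ : ℂ)
        have h1' : 1 ≤ (Real.exp C * lam n) ^ 2 := by nlinarith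
        calc ‖(⟪e n, x⟫ : ℂ)‖ ^ 2 = 1 * ‖(⟪e n, x⟫ : ℂ)‖ ^ 2 := (one_mul _).symm
          _ ≤ (Real.exp C * lam n) ^ 2 * ‖(⟪e n, x⟫ : ℂ)‖ ^ 2 :=
              mul_le_mul_of_nonneg_right h1' (sq_nonneg _)
          _ = Real.exp C ^ 2 * (lam n * ‖(⟪e n, x⟫ : ℂ)‖) ^ 2 := by ring
      have hfinal := hasSum_le hle h1 h2
      nlinarith [norm_nonneg x, norm_nonneg (L x), Real.exp_pos C, mul_nonneg (Real.exp_pos C).le (norm_nonneg (L x))]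
    have hanti : AntilipschitzWith ⟨Real.exp C, (Real.exp_pos C).le⟩ L :=
      ContinuousLinearMap.antilipschitz_of_bound L hlow
    have hker : LinearMap.ker (L : H →ₗ[ℂ] H) = ⊥ := (LinearMap.ker_eq_bot (f := (L : H →ₗ[ℂ] H))).mpr hanti.injective
    have hrange : LinearMap.range (L : H →ₗ[ℂ] H) = ⊤ := by
      have hclosed : IsClosed (Set.range ⇑L) := hanti.isClosed_range L.uniformContinuous
      have hsub : Submodule.span ℂ (Set.range ⇑e) ≤ LinearMap.range (L : H →ₗ[ℂ] H) := by
        rw [Submodule.span_le]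
        rintro _ ⟨n, rfl⟩
        refine ⟨(((lam n)⁻¹ : ℝ) : ℂ) • e n, ?_⟩
        rw [map_smul, ContinuousLinearMap.coe_coe, hL n, smul_smul]
        norm_cast
        rw [inv_mul_cancel₀ (hlampos n).ne']
        simp
      have hdense0 : Dense ((Submodule.span ℂ (Set.range ⇑e) : Submodule ℂ H) : Set H) :=
        Submodule.dense_iff_topologicalClosure_eq_top.mpr e.dense_span
      have hdense : Dense (Set.range ⇑L) := by
        refine hdense0.mono ?_
        intro x hx
        exact hsub hx
      rw [LinearMap.range_eq_top]
      intro y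
      have hy : y ∈ closure (Set.range ⇑L) := hdense y
      rwa [hclosed.closure_eq] at hy
    refine ⟨((ContinuousLinearEquiv.ofBijective L hker hrange).symm : H →L[ℂ] H), ?_, ?_⟩
    · ext x
      exact ContinuousLinearEquiv.ofBijective_apply_symm_apply L hker hrange x
    · ext x
      exact ContinuousLinearEquiv.ofBijective_symm_apply_apply L hker hrange x
  · -- (b) LA = BL
    apply aux_clm_ext e
    intro n
    rw [comp_apply, comp_apply, hA n, hL (n + 1), hL n, map_smul, hB n, smul_smul]
    congr 1
    have hss : (∑ k ∈ Finset.range (n + 1 + 1), u k)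
        = (∑ k ∈ Finset.range (n + 1), u k) + u (n + 1) := Finset.sum_range_succ u (n + 1)
    rw [hss, Real.exp_add]
    push_cast
    ring
  · -- (c) formula for A*A - AA*
    have hDR : adjoint A ∘L A - A ∘L adjoint A = (innerSL ℂ (e 0)).smulRight (e 0) := by
      apply aux_clm_ext e
      intro n
      rw [ContinuousLinearMap.sub_apply, comp_apply, comp_apply, hA n, hAadjS n,
        smulRight_apply, innerSL_apply_apply, horth]
      cases n with
      | zero => simp [hAadj0]
      | succ m => rw [hAadjS m, hA m]; simp
    intro x
    rw [hDR, smulRight_apply, innerSL_apply_apply]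
  · -- (c) compactness
    have hDR : ∀ x : H, (adjoint A ∘L A - A ∘L adjoint A) x = (⟪e 0, x⟫ : ℂ) • e 0 := by
      have hDR' : adjoint A ∘L A - A ∘L adjoint A = (innerSL ℂ (e 0)).smulRight (e 0) := by
        apply aux_clm_ext e
        intro n
        rw [ContinuousLinearMap.sub_apply, comp_apply, comp_apply, hA n, hAadjS n,
          smulRight_apply, innerSL_apply_apply, horth]
        cases n with
        | zero => simp [hAadj0]
        | succ m => rw [hAadjS m, hA m]; simp
      intro x
      rw [hDR', smulRight_apply, innerSL_apply_apply]
    have hg : IsCompactOperator (fun c : ℂ => c • e 0) := by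
      refine ⟨(fun c : ℂ => c • e 0) '' Metric.closedBall 0 1,
        (isCompact_closedBall _ _).image (continuous_id.smul continuous_const), ?_⟩
      exact Filter.mem_of_superset (Metric.closedBall_mem_nhds 0 one_pos)
        (Set.subset_preimage_image _ _)
    have hfun : ⇑(adjoint A ∘L A - A ∘L adjoint A) =
        (fun c : ℂ => c • e 0) ∘ ⇑(innerSL ℂ (e 0)) := by
      funext x
      simp [hDR x]
    rw [hfun]
    exact hg.comp_clm (innerSL ℂ (e 0))
  · -- (d) B*B - BB* is not compact
    set D : H →L[ℂ] H := adjoint B ∘L B - B ∘L adjoint B with hD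
    have hDval : ∀ m : ℕ, D (e (m + 1)) =
        ((Real.exp (u (m + 2)) * Real.exp (u (m + 2))
          - Real.exp (u (m + 1)) * Real.exp (u (m + 1)) : ℝ) : ℂ) • e (m + 1) := by
      intro m
      rw [hD, ContinuousLinearMap.sub_apply, comp_apply, comp_apply, hB (m + 1),
        hBadjS m, map_smul, map_smul, hBadjS (m + 1), hB m, smul_smul, smul_smul]
      rw [← sub_smul]
      push_cast
      ring_nf
    rintro ⟨K, hKc, hKm⟩
    obtain ⟨r, hr, hball⟩ := Metric.mem_nhds_iff.mp hKm
    have hfreq : ∃ᶠ n in Filter.atTop, 1 ≤ n ∧ u n = 0 ∧ u (n + 1) = 1 := by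
      rw [Filter.frequently_atTop]
      intro N
      obtain ⟨n, hn, h0, h1⟩ := hosc (max N 1)
      exact ⟨n, le_trans (le_max_left _ _) hn, le_trans (le_max_right _ _) hn, h0, h1⟩
    obtain ⟨φ, hφmono, hφ⟩ := Filter.extraction_of_frequently_atTop hfreq
    set κ : ℝ := (r / 2) * (Real.exp 1 * Real.exp 1 - 1) with hκdef
    have hexp1 : 2 ≤ Real.exp 1 := by
      have := Real.add_one_le_exp 1
      linarith
    have hκ : 0 < κ := by
      rw [hκdef]
      have hpos : 0 < Real.exp 1 * Real.exp 1 - 1 := by nlinarith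
      exact mul_pos (by linarith) hpos
    set y : ℕ → H := fun k => D (((r / 2 : ℝ) : ℂ) • e (φ k)) with hy
    have hyK : ∀ k, y k ∈ K := by
      intro k
      apply hball
      have hnorm : ‖((r / 2 : ℝ) : ℂ) • e (φ k)‖ = r / 2 := by
        rw [norm_smul, Complex.norm_real, Real.norm_eq_abs, abs_of_pos (by linarith),
          e.orthonormal.1 (φ k), mul_one]
      show ((r / 2 : ℝ) : ℂ) • e (φ k) ∈ Metric.ball 0 r
      rw [Metric.mem_ball, dist_zero_right, hnorm]
      linarith
    have hyval : ∀ k, y k = ((κ : ℝ) : ℂ) • e (φ k) := by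
      intro k
      obtain ⟨h1, h0, h1'⟩ := hφ k
      obtain ⟨m, hm⟩ : ∃ m, φ k = m + 1 := ⟨φ k - 1, by omega⟩
      have hu1 : u (m + 1) = 0 := by rw [← hm]; exact h0
      have hu2 : u (m + 2) = 1 := by
        have h2' := h1'
        rw [hm] at h2'
        exact h2'
      rw [hy]
      simp only
      rw [hm, map_smul, hDval m, smul_smul, hu1, hu2, Real.exp_zero, hκdef]
      push_cast
      ring_nf
    obtain ⟨a, _, ψ, hψmono, hconv⟩ := hKc.tendsto_subseq hyK
    have hcauchy := hconv.cauchySeq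
    rw [Metric.cauchySeq_iff] at hcauchy
    obtain ⟨N, hN⟩ := hcauchy κ hκ
    have hlt := hN N le_rfl (N + 1) (Nat.le_succ N)
    simp only [Function.comp] at hlt
    have hne : φ (ψ N) ≠ φ (ψ (N + 1)) := by
      have hlt' : φ (ψ N) < φ (ψ (N + 1)) := hφmono (hψmono (Nat.lt_succ_self N))
      omega
    -- compute the distance from below
    have hdist : κ ≤ dist (y (ψ N)) (y (ψ (N + 1))) := by
      rw [hyval, hyval, dist_eq_norm, ← smul_sub, norm_smul, Complex.norm_real,
        Real.norm_eq_abs, abs_of_pos hκ]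
      have hsep : 1 ≤ ‖e (φ (ψ N)) - e (φ (ψ (N + 1)))‖ := by
        have hsq : ‖e (φ (ψ N)) - e (φ (ψ (N + 1)))‖ ^ 2 = 2 := by
          rw [@norm_sub_sq ℂ]
          rw [horth]
          rw [if_neg hne]
          rw [e.orthonormal.1, e.orthonormal.1]
          norm_num
        nlinarith [norm_nonneg (e (φ (ψ N)) - e (φ (ψ (N + 1))))]
      nlinarith
    linarith
end
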